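/- With γ ∈ A× the unique unit satisfying ⟨a y, x⟩ = ⟨a x, γ y⟩ for all a ∈ A (in the setting V = Ax ⊕ Ay above), one has γ · τ(γ) = 1. -/

import Mathlib

/-!
Transposing `x` and `y` twice in `B (a • y) x = B (a • x) (γ • y)`, once through the
ε-hermitian symmetry and once through the adjunction of `τ`, shows that the functional
`b ↦ B (b • x) y` is invariant under multiplication by `γ τ(γ)`; hence it kills the principal
ideal of `γ τ(γ) - 1`. Every nonzero ideal of `A` contains the socle `𝔭 ^ (e - 1)`, on which
the functional does not vanish, so `γ τ(γ) - 1 = 0`.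
-/

theorem Ideal.pow_pred_le_of_ne_bot {A : Type*} [CommSemiring A] {𝔭 : Ideal A} {e : ℕ}
    (hideals : ∀ I : Ideal A, ∃ k : ℕ, I = 𝔭 ^ k) (hnil : 𝔭 ^ e = ⊥)
    {I : Ideal A} (hI : I ≠ ⊥) : 𝔭 ^ (e - 1) ≤ I := by
  obtain ⟨k, rfl⟩ := hideals I
  have hk : k < e := by
    by_contra! hek
    exact hI (le_bot_iff.mp (hnil ▸ Ideal.pow_le_pow_right hek))
  exact Ideal.pow_le_pow_right (by omega)

section HermitianPairing

variable {E A V : Type*} [CommRing E] [CommRing A] [AddCommGroup V] [Module A V]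
  {τ : A ≃+* A} {σ : E ≃+* E} {ε : E} {B : V → V → E} {x y : V} {γ : A}

theorem pairing_tau_mul_smul_eq (hτ : ∀ a, τ (τ a) = a)
    (hherm : ∀ v w, B w v = ε * σ (B v w))
    (hadj : ∀ (a : A) (v w : V), B v (a • w) = B (τ a • v) w)
    (hγ : ∀ a : A, B (a • y) x = B (a • x) (γ • y)) (b : A) :
    B ((τ γ * τ b) • x) y = ε * σ (B (b • x) y) :=
  calc B ((τ γ * τ b) • x) y = B (τ b • x) (γ • y) := by rw [hadj, smul_smul]
    _ = B (τ b • y) x := (hγ _).symm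
    _ = ε * σ (B x (τ b • y)) := hherm _ _
    _ = ε * σ (B (b • x) y) := by rw [hadj, hτ]

theorem pairing_mul_tau_smul_eq (hτ : ∀ a, τ (τ a) = a) (hσ : ∀ c, σ (σ c) = c)
    (hε : ε * σ ε = 1) (hherm : ∀ v w, B w v = ε * σ (B v w))
    (hadj : ∀ (a : A) (v w : V), B v (a • w) = B (τ a • v) w)
    (hγ : ∀ a : A, B (a • y) x = B (a • x) (γ • y)) (b : A) :
    B ((γ * τ γ * b) • x) y = B (b • x) y := by
  have h := pairing_tau_mul_smul_eq hτ hherm hadj hγ (τ γ * τ b)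
  rw [map_mul, hτ, hτ, pairing_tau_mul_smul_eq hτ hherm hadj hγ b, map_mul, hσ,
    ← mul_assoc ε, hε, one_mul] at h
  rw [← h]
  congr 2
  ring

theorem pairing_smul_eq_zero_of_mem_span (hτ : ∀ a, τ (τ a) = a) (hσ : ∀ c, σ (σ c) = c)
    (hε : ε * σ ε = 1) (hB₁ : ∀ u v w, B (u + v) w = B u w + B v w)
    (hherm : ∀ v w, B w v = ε * σ (B v w))
    (hadj : ∀ (a : A) (v w : V), B v (a • w) = B (τ a • v) w)
    (hγ : ∀ a : A, B (a • y) x = B (a • x) (γ • y))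
    {a : A} (ha : a ∈ Ideal.span {γ * τ γ - 1}) : B (a • x) y = 0 := by
  obtain ⟨b, rfl⟩ := Ideal.mem_span_singleton'.mp ha
  have hsplit := hB₁ ((b * (γ * τ γ - 1)) • x) (b • x) y
  rw [← add_smul, show b * (γ * τ γ - 1) + b = γ * τ γ * b by ring,
    pairing_mul_tau_smul_eq hτ hσ hε hherm hadj hγ] at hsplit
  exact add_eq_right.mp hsplit.symm

end HermitianPairing

theorem stmt_10_general {E A V : Type*} [Field E] [CommRing A]
    [AddCommGroup V] [Module A V]
    (τ : A ≃+* A) (hτ : ∀ a, τ (τ a) = a)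
    (σ : E ≃+* E) (hσ : ∀ c, σ (σ c) = c)
    (𝔭 : Ideal A) (e : ℕ)
    (hideals : ∀ I : Ideal A, ∃ k : ℕ, I = 𝔭 ^ k)
    (hnil : 𝔭 ^ e = ⊥)
    (ε : E) (hε : ε = 1 ∨ ε = -1)
    (B : V → V → E)
    (hB₁ : ∀ u v w, B (u + v) w = B u w + B v w)
    (hherm : ∀ v w, B w v = ε * σ (B v w))
    (hadj : ∀ (a : A) (v w : V), B v (a • w) = B (τ a • v) w)
    (x y : V)
    (hxy : ∃ a ∈ 𝔭 ^ (e - 1), B (a • x) y ≠ 0)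
    (γ : A)
    (hγ : ∀ a : A, B (a • y) x = B (a • x) (γ • y)) :
    γ * τ γ = 1 := by
  have hεσ : ε * σ ε = 1 := by rcases hε with rfl | rfl <;> simp
  by_contra hne
  have hspan : Ideal.span {γ * τ γ - 1} ≠ ⊥ := by
    rwa [Ne, Ideal.span_singleton_eq_bot, sub_eq_zero]
  obtain ⟨a, ha, hBa⟩ := hxy
  exact hBa (pairing_smul_eq_zero_of_mem_span hτ hσ hεσ hB₁ hherm hadj hγ
    (Ideal.pow_pred_le_of_ne_bot hideals hnil hspan ha))

/-- With `γ ∈ A×` the unique unit satisfying `B (a y) x = B (a x) (γ y)` for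
all `a ∈ A` (in the setting `V = Ax ⊕ Ay` as before), one has `γ · τ(γ) = 1`. -/
theorem stmt_10 {E A V : Type*} [Field E] [CommRing A] [Algebra E A]
    [AddCommGroup V] [Module A V] [Module E V] [IsScalarTower E A V]
    [FiniteDimensional E V]
    (τ : A ≃+* A) (hτ : ∀ a, τ (τ a) = a)
    (σ : E ≃+* E) (hσ : ∀ c, σ (σ c) = c)
    (hcompat : ∀ c : E, τ (algebraMap E A c) = algebraMap E A (σ c))
    (𝔭 : Ideal A) (e : ℕ) (he : 0 < e)
    (hideals : ∀ I : Ideal A, ∃ k : ℕ, I = 𝔭 ^ k)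
    (hchain : ∀ k : ℕ, k < e → 𝔭 ^ (k + 1) < 𝔭 ^ k)
    (hnil : 𝔭 ^ e = ⊥)
    (hτ𝔭 : ∀ a ∈ 𝔭, τ a ∈ 𝔭)
    (ε : E) (hε : ε = 1 ∨ ε = -1)
    (B : V → V → E)
    (hB₁ : ∀ u v w, B (u + v) w = B u w + B v w)
    (hB₂ : ∀ u v w, B u (v + w) = B u v + B u w)
    (hBE : ∀ (c : E) (u w : V), B (c • u) w = c * B u w)
    (hherm : ∀ v w, B w v = ε * σ (B v w))
    (hadj : ∀ (a : A) (v w : V), B v (a • w) = B (τ a • v) w)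
    (x y : V)
    (hx : ∀ a : A, a • x = 0 → a = 0) (hy : ∀ a : A, a • y = 0 → a = 0)
    (hxy : ∃ a ∈ 𝔭 ^ (e - 1), B (a • x) y ≠ 0)
    (hxx : ∀ a ∈ 𝔭 ^ (e - 1), B (a • x) x = 0)
    (hyy : ∀ a ∈ 𝔭 ^ (e - 1), B (a • y) y = 0)
    (hsum : Submodule.span A ({x} : Set V) ⊔ Submodule.span A ({y} : Set V) = ⊤)
    (hmeet : Submodule.span A ({x} : Set V) ⊓ Submodule.span A ({y} : Set V) = ⊥)
    (γ : A) (hγunit : IsUnit γ)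
    (hγ : ∀ a : A, B (a • y) x = B (a • x) (γ • y)) :
    γ * τ γ = 1 :=
  stmt_10_general τ hτ σ hσ 𝔭 e hideals hnil ε hε B hB₁ hherm hadj x y hxy γ hγ
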